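/- arXiv:2405.16238 — 3 statements merged into one kernel-verified Lean document; each statement's English description precedes it below -/
import Mathlib

section
/- A decomposition of a metric space X into closed, pairwise equidistant subsets {X_y : y ∈ Y} induces a metric on the index set Y by |y, y'| := dist(X_y, X_{y'}), and the natural projection X → Y is a submetry. -/
/-- The distance between two subsets of a metric space: the infimum of distances
between their points. -/
noncomputable def setDist {X : Type*} [MetricSpace X] (A B : Set X) : ℝ :=
  sInf (Set.image2 dist A B)

/-- Two subsets are *equidistant* if every point of one admits a point of the other
realizing the distance between the two sets. -/
def AreEquidistant {X : Type*} [MetricSpace X] (A B : Set X) : Prop :=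
  (∀ a ∈ A, ∃ b ∈ B, dist a b = setDist A B) ∧ (∀ b ∈ B, ∃ a ∈ A, dist a b = setDist A B)

/-- A decomposition of a metric space `X` into closed, pairwise equidistant subsets
`{X_y : y ∈ Y}` induces a metric on the index set `Y` by `|y,y'| := dist (X_y, X_{y'})`,
and the natural projection `X → Y` is a submetry. -/
theorem equidistant_decomposition_metric_and_submetry
    {X Y : Type*} [MetricSpace X] (F : Y → Set X) (p : X → Y)
    (hclosed : ∀ y, IsClosed (F y))
    (hnonempty : ∀ y, (F y).Nonempty)
    (hfiber : ∀ y, F y = p ⁻¹' {y})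
    (hequi : ∀ y y', AreEquidistant (F y) (F y')) :
    ∃ m : MetricSpace Y,
      (∀ y y', m.dist y y' = setDist (F y) (F y')) ∧
      (∀ (x : X) (r : ℝ), 0 ≤ r →
        p '' Metric.closedBall x r = {y : Y | m.dist (p x) y ≤ r}) := by
  have hmem : ∀ x : X, x ∈ F (p x) := by
    intro x; rw [hfiber]; exact rfl
  have hp : ∀ {x : X} {y : Y}, x ∈ F y → p x = y := by
    intro x y hx; rw [hfiber] at hx; exact hx
  have hbdd : ∀ y y' : Y, BddBelow (Set.image2 dist (F y) (F y')) := by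
    intro y y'
    refine ⟨0, ?_⟩
    rintro r ⟨a, ha, b, hb, rfl⟩; exact dist_nonneg
  have hle : ∀ (y y' : Y) (a b : X), a ∈ F y → b ∈ F y' →
      setDist (F y) (F y') ≤ dist a b := by
    intro y y' a b ha hb
    exact csInf_le (hbdd y y') (Set.mem_image2_of_mem ha hb)
  have hnn : ∀ y y', 0 ≤ setDist (F y) (F y') := by
    intro y y'
    apply le_csInf
    · obtain ⟨a, ha⟩ := hnonempty y; obtain ⟨b, hb⟩ := hnonempty y'
      exact ⟨_, Set.mem_image2_of_mem ha hb⟩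
    · rintro r ⟨a, _, b, _, rfl⟩; exact dist_nonneg
  have hself : ∀ y, setDist (F y) (F y) = 0 := by
    intro y
    obtain ⟨a, ha⟩ := hnonempty y
    have h1 := hle y y a a ha ha
    simp only [dist_self] at h1
    linarith [hnn y y]
  have hsymm : ∀ y y', setDist (F y) (F y') = setDist (F y') (F y) := by
    intro y y'
    unfold setDist
    congr 1
    ext r
    constructor
    · rintro ⟨a, ha, b, hb, rfl⟩
      exact ⟨b, hb, a, ha, dist_comm b a⟩
    · rintro ⟨a, ha, b, hb, rfl⟩
      exact ⟨b, hb, a, ha, dist_comm b a⟩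
  have htri : ∀ y1 y2 y3, setDist (F y1) (F y3) ≤
      setDist (F y1) (F y2) + setDist (F y2) (F y3) := by
    intro y1 y2 y3
    obtain ⟨a, ha⟩ := hnonempty y1
    obtain ⟨b, hb, hab⟩ := (hequi y1 y2).1 a ha
    obtain ⟨c, hc, hbc⟩ := (hequi y2 y3).1 b hb
    calc setDist (F y1) (F y3) ≤ dist a c := hle _ _ _ _ ha hc
      _ ≤ dist a b + dist b c := dist_triangle a b c
      _ = _ := by rw [hab, hbc]
  have heqz : ∀ y y', setDist (F y) (F y') = 0 → y = y' := by
    intro y y' h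
    obtain ⟨a, ha⟩ := hnonempty y
    obtain ⟨b, hb, hab⟩ := (hequi y y').1 a ha
    rw [h] at hab
    have hab' : a = b := dist_eq_zero.mp hab
    rw [← hp ha, ← hp hb, hab']
  let pm : PseudoMetricSpace Y :=
    { dist := fun y y' => setDist (F y) (F y')
      dist_self := hself
      dist_comm := hsymm
      dist_triangle := htri }
  refine ⟨{ pm with eq_of_dist_eq_zero := fun {y y'} h => heqz y y' h }, fun y y' => rfl,
    ?_⟩
  intro x r hr
  ext y
  constructor
  · rintro ⟨x', hx', rfl⟩
    show setDist (F (p x)) (F (p x')) ≤ r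
    calc setDist (F (p x)) (F (p x')) ≤ dist x x' := hle _ _ _ _ (hmem x) (hmem x')
      _ = dist x' x := dist_comm x x'
      _ ≤ r := Metric.mem_closedBall.mp hx'
  · intro hy
    have hy' : setDist (F (p x)) (F y) ≤ r := hy
    obtain ⟨b, hb, hxb⟩ := (hequi (p x) y).1 x (hmem x)
    exact ⟨b, by rw [Metric.mem_closedBall, dist_comm, hxb]; exact hy', hp hb⟩
end

section
/- If δ : X → Y is a submetry and x, x' ∈ X are δ-near (i.e. dist(x,x') = dist(δ(x), δ(x'))), then δ maps any geodesic between x and x' isometrically onto a geodesic between δ(x) and δ(x'). -/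
/-- A submetry between metric spaces. -/
def IsSubmetry {X Y : Type*} [MetricSpace X] [MetricSpace Y] (f : X → Y) : Prop :=
  ∀ (x : X) (r : ℝ), 0 ≤ r → f '' Metric.closedBall x r = Metric.closedBall (f x) r

/-- A geodesic from `x` to `y`, parametrized by arclength on `[0, dist x y]`. -/
def GeodesicBetween {X : Type*} [MetricSpace X] (γ : ℝ → X) (x y : X) : Prop :=
  γ 0 = x ∧ γ (dist x y) = y ∧
    ∀ s ∈ Set.Icc (0 : ℝ) (dist x y), ∀ t ∈ Set.Icc (0 : ℝ) (dist x y),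
      dist (γ s) (γ t) = |s - t|

/-- If `δ : X → Y` is a submetry and `x, x'` are `δ`-near (`dist x x' = dist (δ x) (δ x')`),
then `δ` maps any geodesic between `x` and `x'` isometrically onto a geodesic between
`δ x` and `δ x'`. -/
theorem submetry_maps_geodesic_between_near_points
    {X Y : Type*} [MetricSpace X] [MetricSpace Y] (δ : X → Y) (hδ : IsSubmetry δ)
    (x x' : X) (hnear : dist x x' = dist (δ x) (δ x'))
    (γ : ℝ → X) (hγ : GeodesicBetween γ x x') :
    GeodesicBetween (δ ∘ γ) (δ x) (δ x') ∧
      ∀ s ∈ Set.Icc (0 : ℝ) (dist x x'), ∀ t ∈ Set.Icc (0 : ℝ) (dist x x'),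
        dist (δ (γ s)) (δ (γ t)) = dist (γ s) (γ t) := by
  -- A submetry is 1-Lipschitz
  have hlip : ∀ a b : X, dist (δ a) (δ b) ≤ dist a b := by
    intro a b
    have hb : δ b ∈ Metric.closedBall (δ a) (dist a b) := by
      rw [← hδ a (dist a b) dist_nonneg]
      exact ⟨b, Metric.mem_closedBall.2 (le_of_eq (dist_comm b a)), rfl⟩
    simpa [Metric.mem_closedBall, dist_comm] using hb
  obtain ⟨h0, hD, hiso⟩ := hγ
  set D := dist x x' with hDdef
  have hD0 : (0 : ℝ) ≤ D := dist_nonneg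
  -- key: δ preserves distances along the geodesic
  have key : ∀ s ∈ Set.Icc (0 : ℝ) D, ∀ t ∈ Set.Icc (0 : ℝ) D,
      dist (δ (γ s)) (δ (γ t)) = |s - t| := by
    have main : ∀ s ∈ Set.Icc (0 : ℝ) D, ∀ t ∈ Set.Icc (0 : ℝ) D, s ≤ t →
        dist (δ (γ s)) (δ (γ t)) = t - s := by
      intro s hs t ht hst
      have hub : dist (δ (γ s)) (δ (γ t)) ≤ t - s := by
        calc dist (δ (γ s)) (δ (γ t)) ≤ dist (γ s) (γ t) := hlip _ _
          _ = |s - t| := hiso s hs t ht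
          _ = t - s := by rw [abs_sub_comm]; exact abs_of_nonneg (by linarith)
      have h1 : dist (δ x) (δ (γ s)) ≤ s := by
        have := hlip (γ 0) (γ s)
        rw [hiso 0 ⟨le_refl 0, hD0⟩ s hs, h0, zero_sub, abs_neg, abs_of_nonneg hs.1] at this
        exact this
      have h2 : dist (δ (γ t)) (δ x') ≤ D - t := by
        have := hlip (γ t) (γ D)
        rw [hiso t ht D ⟨hD0, le_refl D⟩, hD, abs_of_nonpos (by linarith [ht.2] : t - D ≤ 0)] at this
        linarith
      have htri : D ≤ dist (δ x) (δ (γ s)) + dist (δ (γ s)) (δ (γ t)) + dist (δ (γ t)) (δ x') :=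
        hnear ▸ dist_triangle4 (δ x) (δ (γ s)) (δ (γ t)) (δ x')
      linarith
    intro s hs t ht
    rcases le_total s t with h | h
    · rw [main s hs t ht h, abs_sub_comm, abs_of_nonneg (by linarith)]
    · rw [dist_comm, main t ht s hs h, abs_of_nonneg (by linarith)]
  constructor
  · refine ⟨by simp [h0], ?_, ?_⟩
    · rw [← hnear]; simp [hD]
    · rw [← hnear]; exact key
  · intro s hs t ht
    rw [key s hs t ht, hiso s hs t ht]
end

section
/- If a convex subset C of the unit sphere Sⁿ⁻¹ contains, together with each of its points, the antipodal point, then C is a totally geodesic subsphere, i.e. the intersection of Sⁿ⁻¹ with a linear subspace of Rⁿ. -/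
open scoped RealInnerProductSpace
open Real Set

/-!
Let `K = {0} ∪ {t • v | t > 0, v ∈ C}` be the cone over `C`. Antipodal symmetry makes `K` closed
under all real scalars. For `u, v ∈ C` that are neither equal nor antipodal and `a, b > 0`, the
normalization of `a • u + b • v` lies on the minimizing arc from `u` to `v`, so convexity puts it
in `C`; in the two degenerate cases `a • u + b • v` is a multiple of `u`. Hence `K` is closed
under addition, so it contains the span of `C`, and `C` is the unit sphere of that span.
-/

/-- Spherical (angular) distance between unit vectors. -/
noncomputable def sphDist {n : ℕ} (u v : EuclideanSpace ℝ (Fin n)) : ℝ :=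
  Real.arccos ⟪u, v⟫

/-- `w` lies on the (unique) minimizing great-circle arc from `u` to `v`
(for unit vectors `u, v` with `0 < sphDist u v < π`). -/
def OnMinArc {n : ℕ} (u v w : EuclideanSpace ℝ (Fin n)) : Prop :=
  ∃ θ ∈ Set.Icc (0 : ℝ) (sphDist u v),
    w = (Real.sin (sphDist u v - θ) / Real.sin (sphDist u v)) • u +
        (Real.sin θ / Real.sin (sphDist u v)) • v

section Cone

variable {E : Type*} [NormedAddCommGroup E] [NormedSpace ℝ E]

def coneOver (C : Set E) : Set E :=
  {x | x = 0 ∨ ‖x‖⁻¹ • x ∈ C}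

lemma smul_mem_coneOver {C : Set E} (hant : ∀ v ∈ C, -v ∈ C) {x : E} (hx : x ∈ coneOver C)
    (t : ℝ) : t • x ∈ coneOver C := by
  rcases hx with rfl | hx
  · simp [coneOver]
  rcases eq_or_ne t 0 with rfl | ht
  · simp [coneOver]
  have hnormalize : ‖t • x‖⁻¹ • (t • x) = (t / |t|) • (‖x‖⁻¹ • x) := by
    rw [norm_smul, Real.norm_eq_abs, mul_inv, smul_smul, smul_smul]
    ring_nf
  right
  rw [hnormalize]
  rcases ht.lt_or_gt with ht | ht
  · simpa [abs_of_neg ht, ht.ne] using hant _ hx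
  · simpa [abs_of_pos ht, ht.ne'] using hx

lemma mem_coneOver_of_mem {C : Set E} {v : E} (hv : v ∈ C) (hv1 : ‖v‖ = 1) : v ∈ coneOver C :=
  Or.inr (by rwa [hv1, inv_one, one_smul])

end Cone

lemma norm_smul_add_smul_sq {F : Type*} [NormedAddCommGroup F] [InnerProductSpace ℝ F]
    {u v : F} (hu : ‖u‖ = 1) (hv : ‖v‖ = 1) (a b : ℝ) :
    ‖a • u + b • v‖ ^ 2 = a ^ 2 + 2 * a * b * ⟪u, v⟫ + b ^ 2 := by
  rw [norm_add_sq_real, norm_smul, norm_smul, hu, hv, real_inner_smul_left,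
    real_inner_smul_right, Real.norm_eq_abs, Real.norm_eq_abs]
  simp only [mul_one, sq_abs]
  ring

lemma cos_sphDist {n : ℕ} {u v : EuclideanSpace ℝ (Fin n)} (hu : ‖u‖ = 1) (hv : ‖v‖ = 1) :
    cos (sphDist u v) = ⟪u, v⟫ := by
  have := abs_le.mp (abs_real_inner_le_norm u v)
  rw [hu, hv, mul_one] at this
  exact Real.cos_arccos this.1 this.2

lemma onMinArc_smul_add_smul {n : ℕ} {u v : EuclideanSpace ℝ (Fin n)}
    (hu : ‖u‖ = 1) (hv : ‖v‖ = 1) (hd0 : 0 < sphDist u v) (hdπ : sphDist u v < π)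
    {α β : ℝ} (hα : 0 < α) (hβ : 0 < β) (hw : ‖α • u + β • v‖ = 1) :
    OnMinArc u v (α • u + β • v) := by
  set d := sphDist u v
  have hs : 0 < sin d := sin_pos_of_pos_of_lt_pi hd0 hdπ
  have hnorm := norm_smul_add_smul_sq hu hv α β
  rw [hw, ← cos_sphDist hu hv] at hnorm
  set x := α + β * cos d
  have hx2 : 1 - x ^ 2 = (β * sin d) ^ 2 := by nlinarith [sin_sq_add_cos_sq d]
  have hx : x ^ 2 ≤ 1 := by nlinarith
  have hcosθ : cos (arccos x) = x := cos_arccos (by nlinarith) (by nlinarith)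
  have hsinθ : sin (arccos x) = β * sin d := by
    rw [sin_arccos, hx2, Real.sqrt_sq (by positivity)]
  have hsin_sub : sin (d - arccos x) = α * sin d := by
    rw [sin_sub, hsinθ, hcosθ]; ring
  -- the parameter is the angle from `u` to `α • u + β • v`
  refine ⟨arccos x, ⟨arccos_nonneg x, ?_⟩, ?_⟩
  · by_contra! h
    have := sin_nonpos_of_nonpos_of_neg_pi_le (x := d - arccos x) (by linarith)
      (by linarith [arccos_le_pi x])
    nlinarith
  · rw [hsin_sub, hsinθ, mul_div_cancel_right₀ _ hs.ne', mul_div_cancel_right₀ _ hs.ne']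

lemma smul_add_smul_mem_coneOver {n : ℕ} {C : Set (EuclideanSpace ℝ (Fin n))}
    (hunit : ∀ v ∈ C, ‖v‖ = 1)
    (hconv : ∀ u ∈ C, ∀ v ∈ C, 0 < sphDist u v → sphDist u v < π →
      ∀ w, OnMinArc u v w → w ∈ C)
    (hant : ∀ v ∈ C, -v ∈ C) {u v : EuclideanSpace ℝ (Fin n)} (hu : u ∈ C) (hv : v ∈ C)
    {a b : ℝ} (ha : 0 < a) (hb : 0 < b) : a • u + b • v ∈ coneOver C := by
  have hu1 := hunit u hu
  have hv1 := hunit v hv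
  have hc := abs_le.mp (abs_real_inner_le_norm u v)
  rw [hu1, hv1, mul_one] at hc
  rcases hc.2.eq_or_lt with hc1 | hc1
  · obtain rfl := (inner_eq_one_iff_of_norm_eq_one hu1 hv1).mp hc1
    rw [← add_smul]
    exact smul_mem_coneOver hant (mem_coneOver_of_mem hu hu1) _
  rcases hc.1.eq_or_lt with hc2 | hc2
  · obtain rfl := (inner_eq_neg_one_iff_of_norm_eq_one hu1 hv1).mp hc2.symm
    rw [smul_neg, neg_add_eq_sub, ← sub_smul]
    exact smul_mem_coneOver hant (mem_coneOver_of_mem hv hv1) _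
  set r := ‖a • u + b • v‖
  have hr : 0 < r := by
    have hr2 := norm_smul_add_smul_sq hu1 hv1 a b
    have : 0 < r ^ 2 := by nlinarith [mul_pos ha hb, sq_nonneg (a - b)]
    nlinarith [norm_nonneg (a • u + b • v)]
  have hd0 : 0 < sphDist u v := arccos_pos.mpr hc1
  have hdπ : sphDist u v < π := arccos_lt_pi.mpr hc2
  have hcomb : r⁻¹ • (a • u + b • v) = (a / r) • u + (b / r) • v := by
    rw [smul_add, smul_smul, smul_smul, div_eq_inv_mul, div_eq_inv_mul]
  right
  rw [hcomb]
  refine hconv u hu v hv hd0 hdπ _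
    (onMinArc_smul_add_smul hu1 hv1 hd0 hdπ (div_pos ha hr) (div_pos hb hr) ?_)
  rw [← hcomb, norm_smul, norm_inv, norm_norm, inv_mul_cancel₀ hr.ne']

lemma add_mem_coneOver {n : ℕ} {C : Set (EuclideanSpace ℝ (Fin n))}
    (hunit : ∀ v ∈ C, ‖v‖ = 1)
    (hconv : ∀ u ∈ C, ∀ v ∈ C, 0 < sphDist u v → sphDist u v < π →
      ∀ w, OnMinArc u v w → w ∈ C)
    (hant : ∀ v ∈ C, -v ∈ C) {x y : EuclideanSpace ℝ (Fin n)}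
    (hx : x ∈ coneOver C) (hy : y ∈ coneOver C) : x + y ∈ coneOver C := by
  rcases eq_or_ne x 0 with rfl | hx0
  · simpa using hy
  rcases eq_or_ne y 0 with rfl | hy0
  · simpa using hx
  have hx' : ‖x‖ ≠ 0 := norm_ne_zero_iff.mpr hx0
  have hy' : ‖y‖ ≠ 0 := norm_ne_zero_iff.mpr hy0
  have h := smul_add_smul_mem_coneOver hunit hconv hant (hx.resolve_left hx0)
    (hy.resolve_left hy0) (norm_pos_iff.mpr hx0) (norm_pos_iff.mpr hy0)
  rwa [smul_inv_smul₀ hx', smul_inv_smul₀ hy'] at h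

lemma span_subset_coneOver {n : ℕ} {C : Set (EuclideanSpace ℝ (Fin n))}
    (hunit : ∀ v ∈ C, ‖v‖ = 1)
    (hconv : ∀ u ∈ C, ∀ v ∈ C, 0 < sphDist u v → sphDist u v < π →
      ∀ w, OnMinArc u v w → w ∈ C)
    (hant : ∀ v ∈ C, -v ∈ C) : (Submodule.span ℝ C : Set _) ⊆ coneOver C := fun x hx => by
  induction hx using Submodule.span_induction with
  | mem x hx => exact mem_coneOver_of_mem hx (hunit x hx)
  | zero => exact Or.inl rfl
  | add x y _ _ hx hy => exact add_mem_coneOver hunit hconv hant hx hy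
  | smul t x _ hx => exact smul_mem_coneOver hant hx t

/-- If a convex subset `C` of the unit sphere `Sⁿ⁻¹` contains, together with each of its
points, the antipodal point, then `C` is a totally geodesic subsphere, i.e. the
intersection of `Sⁿ⁻¹` with a linear subspace of `ℝⁿ`. -/
theorem convex_symmetric_subset_of_sphere_is_subsphere {n : ℕ}
    (C : Set (EuclideanSpace ℝ (Fin n)))
    (hunit : ∀ v ∈ C, ‖v‖ = 1)
    (hconv : ∀ u ∈ C, ∀ v ∈ C, 0 < sphDist u v → sphDist u v < π →
      ∀ w, OnMinArc u v w → w ∈ C)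
    (hant : ∀ v ∈ C, -v ∈ C) :
    ∃ W : Submodule ℝ (EuclideanSpace ℝ (Fin n)),
      C = {v : EuclideanSpace ℝ (Fin n) | ‖v‖ = 1 ∧ v ∈ W} := by
  refine ⟨Submodule.span ℝ C, Set.ext fun v => ⟨fun hv => ?_, fun ⟨hv1, hv⟩ => ?_⟩⟩
  · exact ⟨hunit v hv, Submodule.subset_span hv⟩
  rcases span_subset_coneOver hunit hconv hant hv with rfl | hv
  · simp at hv1
  · rwa [hv1, inv_one, one_smul] at hv
end
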